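/- Let X, Y₁, Y₂ be complete metric spaces and Z a metric space. Let F₁ : X ⇒ Y₁, F₂ : X ⇒ Y₂, G : Y₁ × Y₂ ⇒ Z be closed-graph multifunctions and (x̄,ȳ₁,ȳ₂,z̄) with (x̄,ȳ₁) ∈ Gr F₁, (x̄,ȳ₂) ∈ Gr F₂, ((ȳ₁,ȳ₂),z̄) ∈ Gr G. Assume: (i) F₁ is metrically regular around (x̄,ȳ₁); (ii) F₂ has the Aubin property around (x̄,ȳ₂); (iii) G is metrically regular with respect to y₁ uniformly in y₂ around ((ȳ₁,ȳ₂),z̄); (iv) G has the Aubin property with respect to y₂ uniformly in y₁ around ((ȳ₁,ȳ₂),z̄); (v) 0 < reg F₁(x̄,ȳ₁)·lip F₂(x̄,ȳ₂)·reĝ_{y₁}G((ȳ₁,ȳ₂),z̄)·lip̂_{y₂}G((ȳ₁,ȳ₂),z̄) < 1; and (vi) (F₁,F₂) and G are locally composition-stable around (x̄,(ȳ₁,ȳ₂),z̄). Then H is metrically regular around (x̄,z̄) and reg H(x̄,z̄) ≤ ρ₀ := (reg F₁(x̄,ȳ₁)·reĝ_{y₁}G((ȳ₁,ȳ₂),z̄))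 / (1 − reg F₁(x̄,ȳ₁)·lip F₂(x̄,ȳ₂)·reĝ_{y₁}G((ȳ₁,ȳ₂),z̄)·lip̂_{y₂}G((ȳ₁,ȳ₂),z̄)). -/

import Mathlib

open Filter Set Metric
open scoped ENNReal Topology

/-- The graph of a multifunction. -/
def graphOf {X Y : Type*} (F : X → Set Y) : Set (X × Y) := {p | p.2 ∈ F p.1}

/-- The inverse multifunction: `preImg F y = {x | y ∈ F x}`. -/
def preImg {X Y : Type*} (F : X → Set Y) (y : Y) : Set X := {x | y ∈ F x}

/-- The excess `e(A,B) = sup_{a ∈ A} d(a,B)` (valued in `ℝ≥0∞`). -/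
noncomputable def excess {Y : Type*} [PseudoEMetricSpace Y] (A B : Set Y) : ℝ≥0∞ :=
  ⨆ a ∈ A, EMetric.infEdist a B

/-- `F` is metrically regular around `(x₀, y₀)` with constant `L > 0`. -/
def MetRegAround {X Y : Type*} [MetricSpace X] [MetricSpace Y]
    (F : X → Set Y) (x₀ : X) (y₀ : Y) (L : ℝ) : Prop :=
  ∃ U ∈ 𝓝 x₀, ∃ V ∈ 𝓝 y₀, ∀ x ∈ U, ∀ y ∈ V,
    EMetric.infEdist x (preImg F y) ≤ ENNReal.ofReal L * EMetric.infEdist y (F x)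

/-- `F` has the Aubin property around `(x₀, y₀)` with constant `L > 0`. -/
def AubinAround {X Y : Type*} [MetricSpace X] [MetricSpace Y]
    (F : X → Set Y) (x₀ : X) (y₀ : Y) (L : ℝ) : Prop :=
  ∃ U ∈ 𝓝 x₀, ∃ V ∈ 𝓝 y₀, ∀ x ∈ U, ∀ u ∈ U,
    excess (F x ∩ V) (F u) ≤ ENNReal.ofReal (L * dist x u)

/-- `G` is metrically regular with respect to `y₁` uniformly in `y₂` around
`((y₁₀,y₂₀), z₀)` with constant `L > 0`. -/
def MetRegPartial1 {Y₁ Y₂ Z : Type*} [MetricSpace Y₁] [MetricSpace Y₂] [MetricSpace Z]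
    (G : Y₁ → Y₂ → Set Z) (y₁₀ : Y₁) (y₂₀ : Y₂) (z₀ : Z) (L : ℝ) : Prop :=
  ∃ V₁ ∈ 𝓝 y₁₀, ∃ V₂ ∈ 𝓝 y₂₀, ∃ W ∈ 𝓝 z₀,
    ∀ y₁ ∈ V₁, ∀ y₂ ∈ V₂, ∀ z ∈ W,
      EMetric.infEdist y₁ {y | z ∈ G y y₂} ≤ ENNReal.ofReal L * EMetric.infEdist z (G y₁ y₂)

/-- `G` has the Aubin property with respect to `y₂` uniformly in `y₁` around
`((y₁₀,y₂₀), z₀)` with constant `L > 0`. -/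
def AubinPartial2 {Y₁ Y₂ Z : Type*} [MetricSpace Y₁] [MetricSpace Y₂] [MetricSpace Z]
    (G : Y₁ → Y₂ → Set Z) (y₁₀ : Y₁) (y₂₀ : Y₂) (z₀ : Z) (L : ℝ) : Prop :=
  ∃ V₁ ∈ 𝓝 y₁₀, ∃ V₂ ∈ 𝓝 y₂₀, ∃ W ∈ 𝓝 z₀,
    ∀ y₁ ∈ V₁, ∀ y₂ ∈ V₂, ∀ y₂' ∈ V₂,
      excess (G y₁ y₂ ∩ W) (G y₁ y₂') ≤ ENNReal.ofReal (L * dist y₂ y₂')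

/-- The exact regularity bound `reg F(x₀,y₀)`. -/
noncomputable def regMod {X Y : Type*} [MetricSpace X] [MetricSpace Y]
    (F : X → Set Y) (x₀ : X) (y₀ : Y) : ℝ≥0∞ :=
  sInf {l : ℝ≥0∞ | ∃ L : ℝ, 0 < L ∧ MetRegAround F x₀ y₀ L ∧ l = ENNReal.ofReal L}

/-- The exact Lipschitz bound `lip F(x₀,y₀)`. -/
noncomputable def lipMod {X Y : Type*} [MetricSpace X] [MetricSpace Y]
    (F : X → Set Y) (x₀ : X) (y₀ : Y) : ℝ≥0∞ :=
  sInf {l : ℝ≥0∞ | ∃ L : ℝ, 0 < L ∧ AubinAround F x₀ y₀ L ∧ l = ENNReal.ofReal L}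

/-- The exact partial regularity bound `reĝ_{y₁} G((y₁₀,y₂₀),z₀)`. -/
noncomputable def regHat1Mod {Y₁ Y₂ Z : Type*} [MetricSpace Y₁] [MetricSpace Y₂]
    [MetricSpace Z] (G : Y₁ → Y₂ → Set Z) (y₁₀ : Y₁) (y₂₀ : Y₂) (z₀ : Z) : ℝ≥0∞ :=
  sInf {l : ℝ≥0∞ | ∃ L : ℝ, 0 < L ∧ MetRegPartial1 G y₁₀ y₂₀ z₀ L ∧ l = ENNReal.ofReal L}

/-- The exact partial Lipschitz bound `lip̂_{y₂} G((y₁₀,y₂₀),z₀)`. -/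
noncomputable def lipHat2Mod {Y₁ Y₂ Z : Type*} [MetricSpace Y₁] [MetricSpace Y₂]
    [MetricSpace Z] (G : Y₁ → Y₂ → Set Z) (y₁₀ : Y₁) (y₂₀ : Y₂) (z₀ : Z) : ℝ≥0∞ :=
  sInf {l : ℝ≥0∞ | ∃ L : ℝ, 0 < L ∧ AubinPartial2 G y₁₀ y₂₀ z₀ L ∧ l = ENNReal.ofReal L}

/-- The image of a set under a two-variable multifunction. -/
def imageG {Y₁ Y₂ Z : Type*} (G : Y₁ → Y₂ → Set Z) (S : Set (Y₁ × Y₂)) : Set Z :=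
  ⋃ p ∈ S, G p.1 p.2

/-- The composition `H(x) = G(F₁(x) × F₂(x))`. -/
def compMap {X Y₁ Y₂ Z : Type*} (F₁ : X → Set Y₁) (F₂ : X → Set Y₂)
    (G : Y₁ → Y₂ → Set Z) (x : X) : Set Z :=
  imageG G (F₁ x ×ˢ F₂ x)

/-- `(F₁,F₂)` and `G` are locally composition-stable around `(xb,(yb₁,yb₂),zb)`. -/
def CompStable {X Y₁ Y₂ Z : Type*} [MetricSpace X] [MetricSpace Y₁] [MetricSpace Y₂]
    [MetricSpace Z] (F₁ : X → Set Y₁) (F₂ : X → Set Y₂) (G : Y₁ → Y₂ → Set Z)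
    (xb : X) (yb₁ : Y₁) (yb₂ : Y₂) (zb : Z) : Prop :=
  ∀ ε > (0 : ℝ), ∃ δ > (0 : ℝ), ∀ x ∈ ball xb δ,
    ∀ z ∈ compMap F₁ F₂ G x ∩ ball zb δ,
      ∃ y₁ ∈ F₁ x ∩ ball yb₁ ε, ∃ y₂ ∈ F₂ x ∩ ball yb₂ ε, z ∈ G y₁ y₂

-- auxiliary

theorem MetRegAround.mono {X Y : Type*} [MetricSpace X] [MetricSpace Y]
    {F : X → Set Y} {x₀ : X} {y₀ : Y} {L L' : ℝ} (h : MetRegAround F x₀ y₀ L)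
    (hLL' : L ≤ L') : MetRegAround F x₀ y₀ L' := by
  obtain ⟨U, hU, V, hV, H⟩ := h
  exact ⟨U, hU, V, hV, fun x hx y hy => (H x hx y hy).trans
    (mul_le_mul_left (ENNReal.ofReal_le_ofReal hLL') _)⟩

theorem AubinAround.mono {X Y : Type*} [MetricSpace X] [MetricSpace Y]
    {F : X → Set Y} {x₀ : X} {y₀ : Y} {L L' : ℝ} (h : AubinAround F x₀ y₀ L)
    (hLL' : L ≤ L') : AubinAround F x₀ y₀ L' := by
  obtain ⟨U, hU, V, hV, H⟩ := h
  exact ⟨U, hU, V, hV, fun x hx u hu => (H x hx u hu).trans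
    (ENNReal.ofReal_le_ofReal (mul_le_mul_of_nonneg_right hLL' dist_nonneg))⟩

theorem MetRegPartial1.mono {Y₁ Y₂ Z : Type*} [MetricSpace Y₁] [MetricSpace Y₂] [MetricSpace Z]
    {G : Y₁ → Y₂ → Set Z} {y₁₀ : Y₁} {y₂₀ : Y₂} {z₀ : Z} {L L' : ℝ}
    (h : MetRegPartial1 G y₁₀ y₂₀ z₀ L) (hLL' : L ≤ L') : MetRegPartial1 G y₁₀ y₂₀ z₀ L' := by
  obtain ⟨V₁, hV₁, V₂, hV₂, W, hW, H⟩ := h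
  exact ⟨V₁, hV₁, V₂, hV₂, W, hW, fun y₁ h1 y₂ h2 z hz => (H y₁ h1 y₂ h2 z hz).trans
    (mul_le_mul_left (ENNReal.ofReal_le_ofReal hLL') _)⟩

theorem AubinPartial2.mono {Y₁ Y₂ Z : Type*} [MetricSpace Y₁] [MetricSpace Y₂] [MetricSpace Z]
    {G : Y₁ → Y₂ → Set Z} {y₁₀ : Y₁} {y₂₀ : Y₂} {z₀ : Z} {L L' : ℝ}
    (h : AubinPartial2 G y₁₀ y₂₀ z₀ L) (hLL' : L ≤ L') : AubinPartial2 G y₁₀ y₂₀ z₀ L' := by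
  obtain ⟨V₁, hV₁, V₂, hV₂, W, hW, H⟩ := h
  exact ⟨V₁, hV₁, V₂, hV₂, W, hW, fun y₁ h1 y₂ h2 y₂' h2' => (H y₁ h1 y₂ h2 y₂' h2').trans
    (ENNReal.ofReal_le_ofReal (mul_le_mul_of_nonneg_right hLL' dist_nonneg))⟩

theorem exists_close_of_infEdist_lt {α : Type*} [PseudoMetricSpace α] {a : α} {s : Set α} {c : ℝ}
    (h : EMetric.infEdist a s < ENNReal.ofReal c) : ∃ b ∈ s, dist a b < c := by
  obtain ⟨b, hb, he⟩ := EMetric.infEdist_lt_iff.mp h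
  exact ⟨b, hb, edist_lt_ofReal.mp he⟩

theorem infEdist_le_ofReal_of_mem {α : Type*} [PseudoMetricSpace α] {a b : α} {s : Set α} {c : ℝ}
    (hb : b ∈ s) (h : dist a b ≤ c) : EMetric.infEdist a s ≤ ENNReal.ofReal c :=
  (EMetric.infEdist_le_edist_of_mem hb).trans ((edist_le_ofReal (dist_nonneg.trans h)).mpr h)

theorem infEdist_le_excess {Y : Type*} [PseudoEMetricSpace Y] {A B : Set Y} {a : Y} (ha : a ∈ A) :
    EMetric.infEdist a B ≤ excess A B :=
  le_iSup₂ (f := fun a _ => EMetric.infEdist a B) a ha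

section Key

variable {X Y₁ Y₂ Z : Type*} [MetricSpace X] [CompleteSpace X]
  [MetricSpace Y₁] [CompleteSpace Y₁] [MetricSpace Y₂] [CompleteSpace Y₂] [MetricSpace Z]
  {F₁ : X → Set Y₁} {F₂ : X → Set Y₂} {G : Y₁ → Y₂ → Set Z}
  {xb : X} {yb₁ : Y₁} {yb₂ : Y₂} {zb : Z}

set_option maxHeartbeats 2000000 in
theorem key_construction
    (hclF₁ : IsClosed (graphOf F₁)) (hclF₂ : IsClosed (graphOf F₂))
    (hclG : IsClosed {p : (Y₁ × Y₂) × Z | p.2 ∈ G p.1.1 p.1.2})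
    {L₁ l₂ Lg lg lam : ℝ}
    (hL₁ : 0 < L₁) (hl₂ : 0 < l₂) (hLg : 0 < Lg) (hlg : 0 < lg) (hlam : 1 < lam)
    (hth : lam ^ 3 * (L₁ * l₂ * Lg * lg) < 1)
    (h₁ : MetRegAround F₁ xb yb₁ L₁) (h₂ : AubinAround F₂ xb yb₂ l₂)
    (h₃ : MetRegPartial1 G yb₁ yb₂ zb Lg) (h₄ : AubinPartial2 G yb₁ yb₂ zb lg)
    (hstab : CompStable F₁ F₂ G xb yb₁ yb₂ zb) :
    ∃ δ₀ > 0, ∃ tm > 0, δ₀ ≤ tm ∧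
      ∀ x ∈ ball xb δ₀, ∀ z ∈ ball zb δ₀, ∀ t : ℝ, 0 < t → t ≤ tm →
        (∃ z₀ ∈ compMap F₁ F₂ G x, dist z z₀ < t) →
        ∃ x', z ∈ compMap F₁ F₂ G x' ∧
          dist x x' ≤ lam ^ 2 * L₁ * Lg / (1 - lam ^ 3 * (L₁ * l₂ * Lg * lg)) * t := by
  classical
  obtain ⟨U₁, hU₁, V₁f, hV₁f, hmr₁⟩ := h₁
  obtain ⟨U₂, hU₂, V₂f, hV₂f, hau₂⟩ := h₂
  obtain ⟨V₃a, hV₃a, V₃b, hV₃b, W₃, hW₃, hmr₃⟩ := h₃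
  obtain ⟨V₄a, hV₄a, V₄b, hV₄b, W₄, hW₄, hau₄⟩ := h₄
  obtain ⟨rX, hrX, hsubX⟩ := Metric.mem_nhds_iff.mp (Filter.inter_mem hU₁ hU₂)
  obtain ⟨rY₁, hrY₁, hsubY₁⟩ :=
    Metric.mem_nhds_iff.mp (Filter.inter_mem hV₁f (Filter.inter_mem hV₃a hV₄a))
  obtain ⟨rY₂, hrY₂, hsubY₂⟩ :=
    Metric.mem_nhds_iff.mp (Filter.inter_mem hV₂f (Filter.inter_mem hV₃b hV₄b))
  obtain ⟨rZ, hrZ, hsubZ⟩ := Metric.mem_nhds_iff.mp (Filter.inter_mem hW₃ hW₄)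
  set θ : ℝ := lam ^ 3 * (L₁ * l₂ * Lg * lg) with hθdef
  have hθ0 : 0 < θ := by positivity
  have hθ1 : θ < 1 := hth
  have h1θ : 0 < 1 - θ := by linarith
  set ρ1 : ℝ := lam * Lg with hρ1def
  set ρ2 : ℝ := lam ^ 2 * L₁ * Lg with hρ2def
  set ρ3 : ℝ := lam ^ 3 * (l₂ * (L₁ * Lg)) with hρ3def
  have hρ1 : 0 < ρ1 := by positivity
  have hρ2 : 0 < ρ2 := by positivity
  have hρ3 : 0 < ρ3 := by positivity
  set M : ℝ := (ρ1 + ρ2 + ρ3) / (1 - θ) with hMdef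
  have hM : 0 < M := by positivity
  set rb : ℝ := min (min rX rY₁) (min rY₂ rZ) with hrbdef
  have hrb : 0 < rb := by positivity
  have hballX : ball xb rb ⊆ U₁ ∩ U₂ :=
    (ball_subset_ball ((min_le_left _ _).trans (min_le_left _ _))).trans hsubX
  have hballY₁ : ball yb₁ rb ⊆ V₁f ∩ (V₃a ∩ V₄a) :=
    (ball_subset_ball ((min_le_left _ _).trans (min_le_right _ _))).trans hsubY₁
  have hballY₂ : ball yb₂ rb ⊆ V₂f ∩ (V₃b ∩ V₄b) :=
    (ball_subset_ball ((min_le_right _ _).trans (min_le_left _ _))).trans hsubY₂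
  have hballZ : ball zb rb ⊆ W₃ ∩ W₄ :=
    (ball_subset_ball ((min_le_right _ _).trans (min_le_right _ _))).trans hsubZ
  obtain ⟨δs, hδs, hstab'⟩ := hstab (rb / 2) (by positivity)
  set tm : ℝ := min (rb / (8 * M)) (δs / 2) with htmdef
  have htm : 0 < tm := by positivity
  set δ₀ : ℝ := min (min (δs / 2) (rb / 2)) tm with hδ₀def
  have hδ₀ : 0 < δ₀ := by positivity
  have hδ₀tm : δ₀ ≤ tm := min_le_right _ _
  have hδ₀δs : δ₀ ≤ δs / 2 := (min_le_left _ _).trans (min_le_left _ _)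
  have hδ₀rb : δ₀ ≤ rb / 2 := (min_le_left _ _).trans (min_le_right _ _)
  have htmδs : tm ≤ δs / 2 := min_le_right _ _
  have hMtm : M * tm ≤ rb / 8 := by
    calc M * tm ≤ M * (rb / (8 * M)) := by
          exact mul_le_mul_of_nonneg_left (min_le_left _ _) hM.le
      _ = rb / 8 := by field_simp
  refine ⟨δ₀, hδ₀, tm, htm, hδ₀tm, ?_⟩
  intro x hx z hz t ht0 htmle hz₀
  obtain ⟨z₀, hz₀H, hzz₀⟩ := hz₀
  -- geometric sum facts
  set S : ℕ → ℝ := fun n => (1 - θ ^ n) / (1 - θ) with hSdef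
  have hS0 : S 0 = 0 := by simp [hSdef]
  have hSsucc : ∀ n, S (n + 1) = S n + θ ^ n := by
    intro n
    have : θ ^ (n + 1) = θ ^ n * θ := pow_succ θ n
    have hne : (1 : ℝ) - θ ≠ 0 := h1θ.ne'
    show (1 - θ ^ (n + 1)) / (1 - θ) = (1 - θ ^ n) / (1 - θ) + θ ^ n
    rw [this, div_add' _ _ _ hne]
    congr 1
    ring
  have hSnn : ∀ n, 0 ≤ S n := by
    intro n
    have h1 : θ ^ n ≤ 1 := pow_le_one₀ hθ0.le hθ1.le
    have : 0 ≤ 1 - θ ^ n := by linarith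
    positivity
  have hSle : ∀ n, S n ≤ 1 / (1 - θ) := by
    intro n
    have h1 : 0 ≤ θ ^ n := by positivity
    have h2 : (1 : ℝ) - θ ^ n ≤ 1 := by linarith
    have h3 : (1 - θ ^ n) * (1 - θ) ≤ 1 * (1 - θ) := mul_le_mul_of_nonneg_right h2 h1θ.le
    rw [div_le_div_iff₀ h1θ h1θ]
    linarith

  have hSM : ∀ (n : ℕ) (ρ : ℝ), 0 < ρ → ρ ≤ ρ1 + ρ2 + ρ3 → ρ * t * S n ≤ rb / 8 := by
    intro n ρ hρ hρle
    have h1 : ρ * t ≤ (ρ1 + ρ2 + ρ3) * tm :=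
      mul_le_mul hρle htmle ht0.le (by positivity)
    have h2 : ρ * t * S n ≤ (ρ1 + ρ2 + ρ3) * tm * (1 / (1 - θ)) :=
      mul_le_mul h1 (hSle n) (hSnn n) (by positivity)
    have h3 : (ρ1 + ρ2 + ρ3) * tm * (1 / (1 - θ)) = M * tm := by
      rw [hMdef]; ring
    linarith
  have hxxb : dist x xb < δ₀ := mem_ball.mp hx
  have hzzb : dist z zb < δ₀ := mem_ball.mp hz
  have hzW : z ∈ W₃ ∩ W₄ := hballZ (mem_ball.mpr (by linarith))
  -- initial point from composition stability
  have hxδs : x ∈ ball xb δs := mem_ball.mpr (by linarith)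
  have hz₀δs : z₀ ∈ ball zb δs := by
    have htr : dist z₀ zb ≤ dist z₀ z + dist z zb := dist_triangle _ _ _
    have hcomm : dist z₀ z = dist z z₀ := dist_comm _ _
    exact mem_ball.mpr (by linarith)
  obtain ⟨y₁0, ⟨hy₁0F, hy₁0b⟩, y₂0, ⟨hy₂0F, hy₂0b⟩, hz₀G⟩ := hstab' x hxδs z₀ ⟨hz₀H, hz₀δs⟩
  -- the inductive step
  have hstep : ∀ (n : ℕ) (p : X × Y₁ × Y₂),
      (p.2.1 ∈ F₁ p.1 ∧ p.2.2 ∈ F₂ p.1 ∧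
        EMetric.infEdist z (G p.2.1 p.2.2) ≤ ENNReal.ofReal (θ ^ n * t) ∧
        dist x p.1 ≤ ρ2 * t * S n ∧ dist yb₁ p.2.1 ≤ rb / 2 + ρ1 * t * S n ∧
        dist yb₂ p.2.2 ≤ rb / 2 + ρ3 * t * S n) →
      ∃ q : X × Y₁ × Y₂,
        (q.2.1 ∈ F₁ q.1 ∧ q.2.2 ∈ F₂ q.1 ∧
          EMetric.infEdist z (G q.2.1 q.2.2) ≤ ENNReal.ofReal (θ ^ (n + 1) * t) ∧
          dist x q.1 ≤ ρ2 * t * S (n + 1) ∧ dist yb₁ q.2.1 ≤ rb / 2 + ρ1 * t * S (n + 1) ∧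
          dist yb₂ q.2.2 ≤ rb / 2 + ρ3 * t * S (n + 1)) ∧
        dist p.1 q.1 ≤ ρ2 * t * θ ^ n ∧ dist p.2.1 q.2.1 ≤ ρ1 * t * θ ^ n ∧
        dist p.2.2 q.2.2 ≤ ρ3 * t * θ ^ n ∧ z ∈ G q.2.1 p.2.2 := by
    rintro n ⟨u, v₁, v₂⟩ ⟨ha, hb, hc, hd, he, hf⟩
    simp only at ha hb hc hd he hf
    have hpow : (0 : ℝ) < θ ^ n := by positivity
    have hlam' : (0 : ℝ) < lam - 1 := by linarith
    have hlamp : (0 : ℝ) < lam := by linarith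
    have hsum1 : ρ1 * t * S n + ρ1 * t * θ ^ n = ρ1 * t * S (n + 1) := by rw [hSsucc]; ring
    have hsum2 : ρ2 * t * S n + ρ2 * t * θ ^ n = ρ2 * t * S (n + 1) := by rw [hSsucc]; ring
    have hsum3 : ρ3 * t * S n + ρ3 * t * θ ^ n = ρ3 * t * S (n + 1) := by rw [hSsucc]; ring
    have huball : u ∈ ball xb rb := by
      have h5 := hSM n ρ2 hρ2 (by linarith)
      have htr : dist u xb ≤ dist u x + dist x xb := dist_triangle _ _ _
      have hcomm : dist u x = dist x u := dist_comm _ _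
      exact mem_ball.mpr (by linarith)
    have hv₁ball : v₁ ∈ ball yb₁ rb := by
      have h5 := hSM n ρ1 hρ1 (by linarith)
      have hcomm : dist v₁ yb₁ = dist yb₁ v₁ := dist_comm _ _
      exact mem_ball.mpr (by linarith)
    have hv₂ball : v₂ ∈ ball yb₂ rb := by
      have h5 := hSM n ρ3 hρ3 (by linarith)
      have hcomm : dist v₂ yb₂ = dist yb₂ v₂ := dist_comm _ _
      exact mem_ball.mpr (by linarith)
    -- Step 1: metric regularity of G in y₁
    have hGreg := hmr₃ v₁ (hballY₁ hv₁ball).2.1 v₂ (hballY₂ hv₂ball).2.1 z hzW.1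
    have h1 : EMetric.infEdist v₁ {y | z ∈ G y v₂} < ENNReal.ofReal (ρ1 * t * θ ^ n) := by
      have h2 : ENNReal.ofReal Lg * EMetric.infEdist z (G v₁ v₂) ≤
          ENNReal.ofReal (Lg * (θ ^ n * t)) := by
        rw [ENNReal.ofReal_mul hLg.le]; exact mul_le_mul_right hc _
      refine lt_of_le_of_lt (hGreg.trans h2)
        ((ENNReal.ofReal_lt_ofReal_iff (by positivity)).mpr ?_)
      have hkey : 0 < (lam - 1) * Lg * (θ ^ n * t) :=
        mul_pos (mul_pos hlam' hLg) (by positivity)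
      rw [hρ1def]; linarith
    obtain ⟨w₁, hw₁G, hw₁d⟩ := exists_close_of_infEdist_lt h1
    have hzGw₁ : z ∈ G w₁ v₂ := hw₁G
    have hw₁ball : w₁ ∈ ball yb₁ rb := by
      have h5 := hSM (n + 1) ρ1 hρ1 (by linarith)
      have htr : dist w₁ yb₁ ≤ dist yb₁ v₁ + dist v₁ w₁ := by
        rw [dist_comm w₁ yb₁]; exact dist_triangle _ _ _
      exact mem_ball.mpr (by linarith)
    -- Step 2: metric regularity of F₁
    have hF1 := hmr₁ u (hballX huball).1 w₁ (hballY₁ hw₁ball).1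
    have h6 : EMetric.infEdist w₁ (F₁ u) ≤ ENNReal.ofReal (ρ1 * t * θ ^ n) :=
      infEdist_le_ofReal_of_mem ha (by rw [dist_comm]; exact hw₁d.le)
    have h7 : EMetric.infEdist u (preImg F₁ w₁) < ENNReal.ofReal (ρ2 * t * θ ^ n) := by
      have h2 : ENNReal.ofReal L₁ * EMetric.infEdist w₁ (F₁ u) ≤
          ENNReal.ofReal (L₁ * (ρ1 * t * θ ^ n)) := by
        rw [ENNReal.ofReal_mul hL₁.le]; exact mul_le_mul_right h6 _
      refine lt_of_le_of_lt (hF1.trans h2)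
        ((ENNReal.ofReal_lt_ofReal_iff (by positivity)).mpr ?_)
      have hkey : 0 < (lam - 1) * lam * L₁ * Lg * (t * θ ^ n) :=
        mul_pos (mul_pos (mul_pos (mul_pos hlam' hlamp) hL₁) hLg) (by positivity)
      rw [hρ1def, hρ2def]; linarith
    obtain ⟨u', hu'F, hu'd⟩ := exists_close_of_infEdist_lt h7
    have hw₁F : w₁ ∈ F₁ u' := hu'F
    have hdxu' : dist x u' ≤ ρ2 * t * S (n + 1) := by
      have htr : dist x u' ≤ dist x u + dist u u' := dist_triangle _ _ _
      linarith [hu'd.le]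
    have hu'ball : u' ∈ ball xb rb := by
      have h5 := hSM (n + 1) ρ2 hρ2 (by linarith)
      have htr : dist u' xb ≤ dist u' x + dist x xb := dist_triangle _ _ _
      have hcomm : dist u' x = dist x u' := dist_comm _ _
      exact mem_ball.mpr (by linarith)
    -- Step 3: Aubin property of F₂
    have hF2 := hau₂ u (hballX huball).2 u' (hballX hu'ball).2
    have h9 : EMetric.infEdist v₂ (F₂ u') ≤ ENNReal.ofReal (l₂ * dist u u') :=
      le_trans (infEdist_le_excess (show v₂ ∈ F₂ u ∩ V₂f from ⟨hb, (hballY₂ hv₂ball).1⟩)) hF2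
    have h10 : EMetric.infEdist v₂ (F₂ u') < ENNReal.ofReal (ρ3 * t * θ ^ n) := by
      refine lt_of_le_of_lt (h9.trans (ENNReal.ofReal_le_ofReal
        (mul_le_mul_of_nonneg_left hu'd.le hl₂.le)))
        ((ENNReal.ofReal_lt_ofReal_iff (by positivity)).mpr ?_)
      have hkey : 0 < (lam - 1) * lam ^ 2 * l₂ * L₁ * Lg * (t * θ ^ n) :=
        mul_pos (mul_pos (mul_pos (mul_pos (mul_pos hlam' (by positivity)) hl₂) hL₁) hLg)
          (by positivity)
      rw [hρ2def, hρ3def]; linarith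
    obtain ⟨v₂', hv₂'F, hv₂'d⟩ := exists_close_of_infEdist_lt h10
    have hv₂'pos : dist yb₂ v₂' ≤ rb / 2 + ρ3 * t * S (n + 1) := by
      have htr : dist yb₂ v₂' ≤ dist yb₂ v₂ + dist v₂ v₂' := dist_triangle _ _ _
      linarith [hv₂'d.le]
    have hv₂'ball : v₂' ∈ ball yb₂ rb := by
      have h5 := hSM (n + 1) ρ3 hρ3 (by linarith)
      have hcomm : dist v₂' yb₂ = dist yb₂ v₂' := dist_comm _ _
      exact mem_ball.mpr (by linarith)
    -- Step 4: Aubin property of G in y₂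
    have hGA := hau₄ w₁ (hballY₁ hw₁ball).2.2 v₂ (hballY₂ hv₂ball).2.2 v₂' (hballY₂ hv₂'ball).2.2
    have h11 : EMetric.infEdist z (G w₁ v₂') ≤ ENNReal.ofReal (lg * dist v₂ v₂') :=
      le_trans (infEdist_le_excess (show z ∈ G w₁ v₂ ∩ W₄ from ⟨hzGw₁, hzW.2⟩)) hGA
    have h12 : EMetric.infEdist z (G w₁ v₂') ≤ ENNReal.ofReal (θ ^ (n + 1) * t) := by
      refine h11.trans (ENNReal.ofReal_le_ofReal ?_)
      have hq : lg * (ρ3 * t * θ ^ n) = θ ^ n * θ * t := by rw [hρ3def, hθdef]; ring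
      have h13 : lg * dist v₂ v₂' ≤ lg * (ρ3 * t * θ ^ n) :=
        mul_le_mul_of_nonneg_left hv₂'d.le hlg.le
      rw [pow_succ]; linarith
    refine ⟨(u', w₁, v₂'), ⟨hw₁F, hv₂'F, h12, hdxu', ?_, hv₂'pos⟩, hu'd.le, hw₁d.le, hv₂'d.le,
      hzGw₁⟩
    have htr : dist yb₁ w₁ ≤ dist yb₁ v₁ + dist v₁ w₁ := dist_triangle _ _ _
    simp only
    linarith [hw₁d.le]
  -- build the sequence by recursion and choice
  choose! g hg using hstep
  set f : ℕ → X × Y₁ × Y₂ := fun n => Nat.rec (x, y₁0, y₂0) (fun k s => g k s) n with hfdef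
  have hInv : ∀ n, (f n).2.1 ∈ F₁ (f n).1 ∧ (f n).2.2 ∈ F₂ (f n).1 ∧
      EMetric.infEdist z (G (f n).2.1 (f n).2.2) ≤ ENNReal.ofReal (θ ^ n * t) ∧
      dist x (f n).1 ≤ ρ2 * t * S n ∧ dist yb₁ (f n).2.1 ≤ rb / 2 + ρ1 * t * S n ∧
      dist yb₂ (f n).2.2 ≤ rb / 2 + ρ3 * t * S n := by
    intro n
    induction n with
    | zero =>
      have c0 : EMetric.infEdist z (G y₁0 y₂0) ≤ ENNReal.ofReal (θ ^ 0 * t) :=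
        infEdist_le_ofReal_of_mem hz₀G (by rw [pow_zero, one_mul]; exact hzz₀.le)
      have d0 : dist x x ≤ ρ2 * t * S 0 := by rw [hS0, dist_self]; simp
      have e0 : dist yb₁ y₁0 ≤ rb / 2 + ρ1 * t * S 0 := by
        rw [hS0]
        have h1 := mem_ball.mp hy₁0b
        have hcomm : dist yb₁ y₁0 = dist y₁0 yb₁ := dist_comm _ _
        linarith
      have f0 : dist yb₂ y₂0 ≤ rb / 2 + ρ3 * t * S 0 := by
        rw [hS0]
        have h1 := mem_ball.mp hy₂0b
        have hcomm : dist yb₂ y₂0 = dist y₂0 yb₂ := dist_comm _ _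
        linarith
      exact ⟨hy₁0F, hy₂0F, c0, d0, e0, f0⟩
    | succ n ih => exact (hg n (f n) ih).1
  have hBnd : ∀ n, dist (f n).1 (f (n + 1)).1 ≤ ρ2 * t * θ ^ n ∧
      dist (f n).2.1 (f (n + 1)).2.1 ≤ ρ1 * t * θ ^ n ∧
      dist (f n).2.2 (f (n + 1)).2.2 ≤ ρ3 * t * θ ^ n ∧
      z ∈ G (f (n + 1)).2.1 (f n).2.2 := fun n => (hg n (f n) (hInv n)).2
  -- Cauchy sequences and limits
  have hcx : CauchySeq (fun n => (f n).1) :=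
    cauchySeq_of_le_geometric θ (ρ2 * t) hθ1 (fun n => (hBnd n).1)
  have hcy1 : CauchySeq (fun n => (f n).2.1) :=
    cauchySeq_of_le_geometric θ (ρ1 * t) hθ1 (fun n => (hBnd n).2.1)
  have hcy2 : CauchySeq (fun n => (f n).2.2) :=
    cauchySeq_of_le_geometric θ (ρ3 * t) hθ1 (fun n => (hBnd n).2.2.1)
  obtain ⟨xl, hxl⟩ := cauchySeq_tendsto_of_complete hcx
  obtain ⟨yl1, hyl1⟩ := cauchySeq_tendsto_of_complete hcy1
  obtain ⟨yl2, hyl2⟩ := cauchySeq_tendsto_of_complete hcy2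
  have hdist : dist x xl ≤ ρ2 / (1 - θ) * t := by
    have h0 : (f 0).1 = x := rfl
    have := dist_le_of_le_geometric_of_tendsto₀ θ (ρ2 * t) hθ1 (fun n => (hBnd n).1) hxl
    rw [h0] at this
    rw [div_mul_eq_mul_div]
    linarith [this]
  -- limit memberships via closed graphs
  have hF1l : yl1 ∈ F₁ xl := by
    have htd : Tendsto (fun n => ((f n).1, (f n).2.1)) atTop (𝓝 (xl, yl1)) :=
      hxl.prodMk_nhds hyl1
    exact hclF₁.mem_of_tendsto htd (Filter.Eventually.of_forall fun n => (hInv n).1)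
  have hF2l : yl2 ∈ F₂ xl := by
    have htd : Tendsto (fun n => ((f n).1, (f n).2.2)) atTop (𝓝 (xl, yl2)) :=
      hxl.prodMk_nhds hyl2
    exact hclF₂.mem_of_tendsto htd (Filter.Eventually.of_forall fun n => (hInv n).2.1)
  have hGl : z ∈ G yl1 yl2 := by
    have hs1 : Tendsto (fun n => (f (n + 1)).2.1) atTop (𝓝 yl1) :=
      hyl1.comp (tendsto_add_atTop_nat 1)
    have htd : Tendsto (fun n => (((f (n + 1)).2.1, (f n).2.2), z)) atTop
        (𝓝 ((yl1, yl2), z)) :=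
      (hs1.prodMk_nhds hyl2).prodMk_nhds tendsto_const_nhds
    exact hclG.mem_of_tendsto htd (Filter.Eventually.of_forall fun n => (hBnd n).2.2.2)
  refine ⟨xl, ?_, hdist⟩
  exact Set.mem_iUnion₂.mpr ⟨(yl1, yl2), Set.mem_prod.mpr ⟨hF1l, hF2l⟩, hGl⟩

set_option maxHeartbeats 1000000 in
theorem core_metreg
    (hclF₁ : IsClosed (graphOf F₁)) (hclF₂ : IsClosed (graphOf F₂))
    (hclG : IsClosed {p : (Y₁ × Y₂) × Z | p.2 ∈ G p.1.1 p.1.2})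
    (hy₁ : yb₁ ∈ F₁ xb) (hy₂ : yb₂ ∈ F₂ xb) (hzb : zb ∈ G yb₁ yb₂)
    {L₁ l₂ Lg lg lam : ℝ}
    (hL₁ : 0 < L₁) (hl₂ : 0 < l₂) (hLg : 0 < Lg) (hlg : 0 < lg) (hlam : 1 < lam)
    (hth : lam ^ 3 * (L₁ * l₂ * Lg * lg) < 1)
    (h₁ : MetRegAround F₁ xb yb₁ L₁) (h₂ : AubinAround F₂ xb yb₂ l₂)
    (h₃ : MetRegPartial1 G yb₁ yb₂ zb Lg) (h₄ : AubinPartial2 G yb₁ yb₂ zb lg)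
    (hstab : CompStable F₁ F₂ G xb yb₁ yb₂ zb) :
    MetRegAround (compMap F₁ F₂ G) xb zb
      (lam ^ 2 * L₁ * Lg / (1 - lam ^ 3 * (L₁ * l₂ * Lg * lg))) := by
  classical
  obtain ⟨δ₀, hδ₀, tm, htm, hδtm, Hkey⟩ :=
    key_construction hclF₁ hclF₂ hclG hL₁ hl₂ hLg hlg hlam hth h₁ h₂ h₃ h₄ hstab
  set θ : ℝ := lam ^ 3 * (L₁ * l₂ * Lg * lg) with hθdef
  have hθ0 : 0 < θ := by positivity
  have h1θ : 0 < 1 - θ := by linarith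
  set ρ : ℝ := lam ^ 2 * L₁ * Lg / (1 - θ) with hρdef
  have hρ0 : 0 < ρ := by rw [hρdef]; positivity
  set r : ℝ := min δ₀ (ρ * tm / (1 + ρ)) with hrdef
  have hr0 : 0 < r := lt_min hδ₀ (by positivity)
  have hrδ₀ : r ≤ δ₀ := min_le_left _ _
  refine ⟨ball xb r, ball_mem_nhds _ hr0, ball zb r, ball_mem_nhds _ hr0, ?_⟩
  intro x hx z hz
  rcases lt_or_ge (EMetric.infEdist z (compMap F₁ F₂ G x)) (ENNReal.ofReal tm) with hcase | hcase
  · -- small distance case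
    set e := EMetric.infEdist z (compMap F₁ F₂ G x) with hedef
    have hefin : e ≠ ⊤ := hcase.ne_top
    have heR : e.toReal < tm := by
      have h2 := (ENNReal.toReal_lt_toReal hefin ENNReal.ofReal_ne_top).mpr hcase
      rwa [ENNReal.toReal_ofReal htm.le] at h2
    have heR0 : 0 ≤ e.toReal := ENNReal.toReal_nonneg
    refine ENNReal.le_of_forall_pos_le_add ?_
    intro ε hε hfin
    set δ' : ℝ := min ((ε : ℝ) / ρ) ((tm - e.toReal) / 2) with hδ'def
    have hε' : (0 : ℝ) < (ε : ℝ) := by exact_mod_cast hε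
    have hδ'0 : 0 < δ' := lt_min (div_pos hε' hρ0) (by linarith)
    set tt : ℝ := e.toReal + δ' with httdef
    have htt0 : 0 < tt := by rw [httdef]; linarith
    have httm : tt ≤ tm := by
      have h3 := min_le_right ((ε : ℝ) / ρ) ((tm - e.toReal) / 2)
      rw [httdef]; rw [hδ'def] at *; linarith
    have hex : ∃ z₀ ∈ compMap F₁ F₂ G x, dist z z₀ < tt := by
      apply exists_close_of_infEdist_lt
      calc EMetric.infEdist z (compMap F₁ F₂ G x) = ENNReal.ofReal e.toReal :=
            (ENNReal.ofReal_toReal hefin).symm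
        _ < ENNReal.ofReal tt := (ENNReal.ofReal_lt_ofReal_iff htt0).mpr (by rw [httdef]; linarith)
    obtain ⟨x', hx'H, hxx'⟩ := Hkey x (mem_ball.mpr (lt_of_lt_of_le (mem_ball.mp hx) hrδ₀))
      z (mem_ball.mpr (lt_of_lt_of_le (mem_ball.mp hz) hrδ₀)) tt htt0 httm hex
    have hle : EMetric.infEdist x (preImg (compMap F₁ F₂ G) z) ≤ ENNReal.ofReal (ρ * tt) :=
      infEdist_le_ofReal_of_mem hx'H hxx'
    refine hle.trans ?_
    have hρδ' : ρ * δ' ≤ (ε : ℝ) := by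
      have h4 := min_le_left ((ε : ℝ) / ρ) ((tm - e.toReal) / 2)
      calc ρ * δ' ≤ ρ * ((ε : ℝ) / ρ) := mul_le_mul_of_nonneg_left h4 hρ0.le
        _ = (ε : ℝ) := by field_simp
    calc ENNReal.ofReal (ρ * tt) = ENNReal.ofReal (ρ * e.toReal + ρ * δ') := by
          rw [httdef]; ring_nf
      _ ≤ ENNReal.ofReal (ρ * e.toReal) + ENNReal.ofReal (ρ * δ') := ENNReal.ofReal_add_le
      _ ≤ ENNReal.ofReal ρ * e + (ε : ℝ≥0∞) := by
          refine add_le_add ?_ ?_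
          · rw [ENNReal.ofReal_mul hρ0.le, ENNReal.ofReal_toReal hefin]
          · exact (ENNReal.ofReal_le_ofReal hρδ').trans (by rw [ENNReal.ofReal_coe_nnreal])
  · -- large distance case
    have hzb_mem : zb ∈ compMap F₁ F₂ G xb :=
      Set.mem_iUnion₂.mpr ⟨(yb₁, yb₂), Set.mem_prod.mpr ⟨hy₁, hy₂⟩, hzb⟩
    have hex : ∃ z₀ ∈ compMap F₁ F₂ G xb, dist z z₀ < r :=
      ⟨zb, hzb_mem, mem_ball.mp hz⟩
    obtain ⟨x', hx'H, hxx'⟩ := Hkey xb (mem_ball_self hδ₀)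
      z (mem_ball.mpr (lt_of_lt_of_le (mem_ball.mp hz) hrδ₀)) r hr0 (hrδ₀.trans hδtm) hex
    have hdx : dist x x' ≤ r + ρ * r := by
      have htr : dist x x' ≤ dist x xb + dist xb x' := dist_triangle _ _ _
      have h5 := mem_ball.mp hx
      linarith
    have hle : EMetric.infEdist x (preImg (compMap F₁ F₂ G) z) ≤ ENNReal.ofReal (r + ρ * r) :=
      infEdist_le_ofReal_of_mem hx'H hdx
    refine hle.trans ?_
    have hrr : r + ρ * r ≤ ρ * tm := by
      have h2 : r ≤ ρ * tm / (1 + ρ) := min_le_right _ _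
      have h3 : (1 + ρ) * r ≤ (1 + ρ) * (ρ * tm / (1 + ρ)) :=
        mul_le_mul_of_nonneg_left h2 (by positivity)
      have h4 : (1 + ρ) * (ρ * tm / (1 + ρ)) = ρ * tm := by field_simp
      linarith
    calc ENNReal.ofReal (r + ρ * r) ≤ ENNReal.ofReal (ρ * tm) := ENNReal.ofReal_le_ofReal hrr
      _ = ENNReal.ofReal ρ * ENNReal.ofReal tm := ENNReal.ofReal_mul hρ0.le
      _ ≤ ENNReal.ofReal ρ * EMetric.infEdist z (compMap F₁ F₂ G x) :=
          mul_le_mul_right hcase _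

end Key

set_option maxHeartbeats 1000000 in
/-- main result, Theorem 5: metric regularity of the composition. -/
theorem main_result_metric_regularity_of_composition
    {X Y₁ Y₂ Z : Type*} [MetricSpace X] [CompleteSpace X] [MetricSpace Y₁] [CompleteSpace Y₁]
    [MetricSpace Y₂] [CompleteSpace Y₂] [MetricSpace Z]
    (F₁ : X → Set Y₁) (F₂ : X → Set Y₂) (G : Y₁ → Y₂ → Set Z)
    (hclF₁ : IsClosed (graphOf F₁)) (hclF₂ : IsClosed (graphOf F₂))
    (hclG : IsClosed {p : (Y₁ × Y₂) × Z | p.2 ∈ G p.1.1 p.1.2})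
    (xb : X) (yb₁ : Y₁) (yb₂ : Y₂) (zb : Z)
    (hy₁ : yb₁ ∈ F₁ xb) (hy₂ : yb₂ ∈ F₂ xb) (hzb : zb ∈ G yb₁ yb₂)
    (hregF₁ : ∃ L > (0 : ℝ), MetRegAround F₁ xb yb₁ L)
    (haubF₂ : ∃ L > (0 : ℝ), AubinAround F₂ xb yb₂ L)
    (hregG : ∃ L > (0 : ℝ), MetRegPartial1 G yb₁ yb₂ zb L)
    (haubG : ∃ L > (0 : ℝ), AubinPartial2 G yb₁ yb₂ zb L)
    (hprod :
      0 < regMod F₁ xb yb₁ * lipMod F₂ xb yb₂ * regHat1Mod G yb₁ yb₂ zb *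
          lipHat2Mod G yb₁ yb₂ zb ∧
      regMod F₁ xb yb₁ * lipMod F₂ xb yb₂ * regHat1Mod G yb₁ yb₂ zb *
          lipHat2Mod G yb₁ yb₂ zb < 1)
    (hstab : CompStable F₁ F₂ G xb yb₁ yb₂ zb) :
    (∃ L > (0 : ℝ), MetRegAround (compMap F₁ F₂ G) xb zb L) ∧
    regMod (compMap F₁ F₂ G) xb zb ≤
      (regMod F₁ xb yb₁ * regHat1Mod G yb₁ yb₂ zb) /
        (1 - regMod F₁ xb yb₁ * lipMod F₂ xb yb₂ * regHat1Mod G yb₁ yb₂ zb *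
          lipHat2Mod G yb₁ yb₂ zb) := by
  classical
  obtain ⟨hpos, hlt1⟩ := hprod
  set a := regMod F₁ xb yb₁ with hadef
  set b := lipMod F₂ xb yb₂ with hbdef
  set c := regHat1Mod G yb₁ yb₂ zb with hcdef
  set d := lipHat2Mod G yb₁ yb₂ zb with hddef
  have hane : a ≠ ⊤ := by
    obtain ⟨L, hL, hm⟩ := hregF₁
    exact ne_top_of_le_ne_top ENNReal.ofReal_ne_top (sInf_le ⟨L, hL, hm, rfl⟩)
  have hbne : b ≠ ⊤ := by
    obtain ⟨L, hL, hm⟩ := haubF₂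
    exact ne_top_of_le_ne_top ENNReal.ofReal_ne_top (sInf_le ⟨L, hL, hm, rfl⟩)
  have hcne : c ≠ ⊤ := by
    obtain ⟨L, hL, hm⟩ := hregG
    exact ne_top_of_le_ne_top ENNReal.ofReal_ne_top (sInf_le ⟨L, hL, hm, rfl⟩)
  have hdne : d ≠ ⊤ := by
    obtain ⟨L, hL, hm⟩ := haubG
    exact ne_top_of_le_ne_top ENNReal.ofReal_ne_top (sInf_le ⟨L, hL, hm, rfl⟩)
  have ha0 : a ≠ 0 := by intro h; rw [h] at hpos; simp at hpos
  have hb0 : b ≠ 0 := by intro h; rw [h] at hpos; simp at hpos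
  have hc0 : c ≠ 0 := by intro h; rw [h] at hpos; simp at hpos
  have hd0 : d ≠ 0 := by intro h; rw [h] at hpos; simp at hpos
  set A := a.toReal with hAdef
  set B := b.toReal with hBdef
  set C := c.toReal with hCdef
  set D := d.toReal with hDdef
  have hA : 0 < A := ENNReal.toReal_pos ha0 hane
  have hB : 0 < B := ENNReal.toReal_pos hb0 hbne
  have hC : 0 < C := ENNReal.toReal_pos hc0 hcne
  have hD : 0 < D := ENNReal.toReal_pos hd0 hdne
  have haA : a = ENNReal.ofReal A := (ENNReal.ofReal_toReal hane).symm
  have hbB : b = ENNReal.ofReal B := (ENNReal.ofReal_toReal hbne).symm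
  have hcC : c = ENNReal.ofReal C := (ENNReal.ofReal_toReal hcne).symm
  have hdD : d = ENNReal.ofReal D := (ENNReal.ofReal_toReal hdne).symm
  have e2 : a * b * c * d = ENNReal.ofReal (A * B * C * D) := by
    rw [haA, hbB, hcC, hdD, ← ENNReal.ofReal_mul hA.le,
      ← ENNReal.ofReal_mul (by positivity), ← ENNReal.ofReal_mul (by positivity)]
  have hABCD : A * B * C * D < 1 := by
    rw [e2] at hlt1
    exact ENNReal.ofReal_lt_one.mp hlt1
  have h1ABCD : 0 < 1 - A * B * C * D := by linarith
  -- approximate constants realizing the moduli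
  have happrox₁ : ∀ s : ℝ, 0 < s → MetRegAround F₁ xb yb₁ (A + s) := by
    intro s hs
    have hlt : a < ENNReal.ofReal (A + s) := by
      rw [haA]; exact (ENNReal.ofReal_lt_ofReal_iff (by linarith)).mpr (by linarith)
    rw [hadef] at hlt
    simp only [regMod] at hlt
    obtain ⟨l, hl, hllt⟩ := sInf_lt_iff.mp hlt
    obtain ⟨L, hL0, hmr, rfl⟩ := hl
    refine hmr.mono ?_
    by_contra hcon
    push_neg at hcon
    exact absurd hllt (not_lt.mpr (ENNReal.ofReal_le_ofReal hcon.le))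
  have happrox₂ : ∀ s : ℝ, 0 < s → AubinAround F₂ xb yb₂ (B + s) := by
    intro s hs
    have hlt : b < ENNReal.ofReal (B + s) := by
      rw [hbB]; exact (ENNReal.ofReal_lt_ofReal_iff (by linarith)).mpr (by linarith)
    rw [hbdef] at hlt
    simp only [lipMod] at hlt
    obtain ⟨l, hl, hllt⟩ := sInf_lt_iff.mp hlt
    obtain ⟨L, hL0, hmr, rfl⟩ := hl
    refine hmr.mono ?_
    by_contra hcon
    push_neg at hcon
    exact absurd hllt (not_lt.mpr (ENNReal.ofReal_le_ofReal hcon.le))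
  have happrox₃ : ∀ s : ℝ, 0 < s → MetRegPartial1 G yb₁ yb₂ zb (C + s) := by
    intro s hs
    have hlt : c < ENNReal.ofReal (C + s) := by
      rw [hcC]; exact (ENNReal.ofReal_lt_ofReal_iff (by linarith)).mpr (by linarith)
    rw [hcdef] at hlt
    simp only [regHat1Mod] at hlt
    obtain ⟨l, hl, hllt⟩ := sInf_lt_iff.mp hlt
    obtain ⟨L, hL0, hmr, rfl⟩ := hl
    refine hmr.mono ?_
    by_contra hcon
    push_neg at hcon
    exact absurd hllt (not_lt.mpr (ENNReal.ofReal_le_ofReal hcon.le))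
  have happrox₄ : ∀ s : ℝ, 0 < s → AubinPartial2 G yb₁ yb₂ zb (D + s) := by
    intro s hs
    have hlt : d < ENNReal.ofReal (D + s) := by
      rw [hdD]; exact (ENNReal.ofReal_lt_ofReal_iff (by linarith)).mpr (by linarith)
    rw [hddef] at hlt
    simp only [lipHat2Mod] at hlt
    obtain ⟨l, hl, hllt⟩ := sInf_lt_iff.mp hlt
    obtain ⟨L, hL0, hmr, rfl⟩ := hl
    refine hmr.mono ?_
    by_contra hcon
    push_neg at hcon
    exact absurd hllt (not_lt.mpr (ENNReal.ofReal_le_ofReal hcon.le))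
  -- continuity of the constants in the slack parameter
  set ρ₀ : ℝ := A * C / (1 - A * B * C * D) with hρ₀def
  have hρ₀pos : 0 < ρ₀ := by rw [hρ₀def]; positivity
  have hcontg : Tendsto (fun s : ℝ => (1 + s) ^ 3 * ((A + s) * (B + s) * (C + s) * (D + s)))
      (𝓝[>] 0) (𝓝 (A * B * C * D)) := by
    have hg : ContinuousAt (fun s : ℝ => (1 + s) ^ 3 * ((A + s) * (B + s) * (C + s) * (D + s)))
        0 := by fun_prop
    have h2 : Tendsto (fun s : ℝ => (1 + s) ^ 3 * ((A + s) * (B + s) * (C + s) * (D + s)))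
        (𝓝 0) (𝓝 (A * B * C * D)) := by
      have h3 := hg.tendsto
      convert h3 using 2
      norm_num
    exact h2.mono_left nhdsWithin_le_nhds
  have hcontf : Tendsto (fun s : ℝ => (1 + s) ^ 2 * (A + s) * (C + s) /
      (1 - (1 + s) ^ 3 * ((A + s) * (B + s) * (C + s) * (D + s)))) (𝓝[>] 0) (𝓝 ρ₀) := by
    have hnum : ContinuousAt (fun s : ℝ => (1 + s) ^ 2 * (A + s) * (C + s)) 0 := by fun_prop
    have hden : ContinuousAt
        (fun s : ℝ => 1 - (1 + s) ^ 3 * ((A + s) * (B + s) * (C + s) * (D + s))) 0 := by fun_prop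
    have hne : (fun s : ℝ => 1 - (1 + s) ^ 3 * ((A + s) * (B + s) * (C + s) * (D + s))) 0 ≠ 0 := by
      norm_num; linarith
    have hcf := hnum.div hden hne
    have h2 : Tendsto (fun s : ℝ => (1 + s) ^ 2 * (A + s) * (C + s) /
        (1 - (1 + s) ^ 3 * ((A + s) * (B + s) * (C + s) * (D + s)))) (𝓝 0) (𝓝 ρ₀) := by
      have h3 := hcf.tendsto
      convert h3 using 2
      · rfl
      · rw [hρ₀def]
        norm_num
    exact h2.mono_left nhdsWithin_le_nhds
  have hfind : ∀ εR : ℝ, 0 < εR → ∃ s : ℝ, 0 < s ∧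
      (1 + s) ^ 3 * ((A + s) * (B + s) * (C + s) * (D + s)) < 1 ∧
      (1 + s) ^ 2 * (A + s) * (C + s) /
        (1 - (1 + s) ^ 3 * ((A + s) * (B + s) * (C + s) * (D + s))) < ρ₀ + εR := by
    intro εR hεR
    have h1 := hcontg.eventually_lt_const hABCD
    have h2 := hcontf.eventually_lt_const (show ρ₀ < ρ₀ + εR by linarith)
    have h3 : ∀ᶠ s : ℝ in 𝓝[>] 0, 0 < s := eventually_mem_nhdsWithin
    obtain ⟨s, hs1, hs2, hs3⟩ := (h3.and (h1.and h2)).exists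
    exact ⟨s, hs1, hs2, hs3⟩
  have hmra : ∀ s : ℝ, 0 < s → (1 + s) ^ 3 * ((A + s) * (B + s) * (C + s) * (D + s)) < 1 →
      MetRegAround (compMap F₁ F₂ G) xb zb ((1 + s) ^ 2 * (A + s) * (C + s) /
        (1 - (1 + s) ^ 3 * ((A + s) * (B + s) * (C + s) * (D + s)))) := by
    intro s hs hlt
    exact core_metreg hclF₁ hclF₂ hclG hy₁ hy₂ hzb (by linarith) (by linarith) (by linarith)
      (by linarith) (by linarith) hlt (happrox₁ s hs) (happrox₂ s hs) (happrox₃ s hs)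
      (happrox₄ s hs) hstab
  constructor
  · obtain ⟨s, hs, hg1, _⟩ := hfind 1 one_pos
    exact ⟨_, div_pos (by positivity) (by linarith), hmra s hs hg1⟩
  · have e1 : a * c = ENNReal.ofReal (A * C) := by
      rw [haA, hcC, ← ENNReal.ofReal_mul hA.le]
    have e3 : (1 : ℝ≥0∞) - ENNReal.ofReal (A * B * C * D) = ENNReal.ofReal (1 - A * B * C * D) := by
      rw [ENNReal.ofReal_sub 1 (by positivity), ENNReal.ofReal_one]
    have hRHS : a * c / (1 - a * b * c * d) = ENNReal.ofReal ρ₀ := by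
      rw [e1, e2, e3, hρ₀def, ENNReal.ofReal_div_of_pos h1ABCD]
    rw [hRHS]
    refine ENNReal.le_of_forall_pos_le_add ?_
    intro ε hε hfin
    obtain ⟨s, hs, hg1, hf⟩ := hfind ε (by exact_mod_cast hε)
    have hLpos : 0 < (1 + s) ^ 2 * (A + s) * (C + s) /
        (1 - (1 + s) ^ 3 * ((A + s) * (B + s) * (C + s) * (D + s))) :=
      div_pos (by positivity) (by linarith)
    have hmem : regMod (compMap F₁ F₂ G) xb zb ≤ ENNReal.ofReal ((1 + s) ^ 2 * (A + s) * (C + s) /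
        (1 - (1 + s) ^ 3 * ((A + s) * (B + s) * (C + s) * (D + s)))) :=
      sInf_le ⟨_, hLpos, hmra s hs hg1, rfl⟩
    calc regMod (compMap F₁ F₂ G) xb zb
        ≤ ENNReal.ofReal ((1 + s) ^ 2 * (A + s) * (C + s) /
          (1 - (1 + s) ^ 3 * ((A + s) * (B + s) * (C + s) * (D + s)))) := hmem
      _ ≤ ENNReal.ofReal (ρ₀ + (ε : ℝ)) := ENNReal.ofReal_le_ofReal hf.le
      _ ≤ ENNReal.ofReal ρ₀ + ENNReal.ofReal (ε : ℝ) := ENNReal.ofReal_add_le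
      _ = ENNReal.ofReal ρ₀ + (ε : ℝ≥0∞) := by rw [ENNReal.ofReal_coe_nnreal]
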